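/- Let n = p₁p₂⋯p_k with k ≥ 3, where the pᵢ are pairwise distinct prime numbers. Then the second ideal intersection graph SII(ℤ_n) contains a cycle of length 3; concretely, the ideals ⟨p₁p₂⋯p_{k-1}⟩, ⟨p₁p₂⋯p_{k-2}⟩ and ⟨p_{k-1}⟩ are three pairwise adjacent vertices of SII(ℤ_n). -/

import Mathlib

open Pointwise

/-- An ideal `I` of a commutative ring `R` is a *second ideal* if `I ≠ (0)` and
for every `r : R`, either `r • I = (0)` or `r • I = I`. -/
def IsSecondIdeal {R : Type*} [CommRing R] (I : Ideal R) : Prop :=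
  I ≠ ⊥ ∧ ∀ r : R, r • I = ⊥ ∨ r • I = I

/-- The *second ideal intersection graph* `SII R`: vertices are the nonzero proper
ideals of `R`, and two distinct vertices `I`, `J` are adjacent iff `I ⊓ J` is a
second ideal of `R`. -/
def SII (R : Type*) [CommRing R] : SimpleGraph {I : Ideal R // I ≠ ⊥ ∧ I ≠ ⊤} where
  Adj I J := I ≠ J ∧ IsSecondIdeal (I.1 ⊓ J.1)
  symm := ⟨fun I J h => ⟨h.1.symm, by beta_reduce; rw [inf_comm]; exact h.2⟩⟩
  loopless := ⟨fun I h => h.1 rfl⟩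

lemma dvd_val_iff {n d : ℕ} [NeZero n] (hd : d ∣ n) (x : ZMod n) :
    (d : ZMod n) ∣ x ↔ d ∣ x.val := by
  constructor
  · rintro ⟨y, rfl⟩
    rw [ZMod.val_mul, ZMod.val_natCast]
    rw [Nat.dvd_mod_iff hd]
    exact Dvd.dvd.mul_right ((Nat.dvd_mod_iff hd).mpr dvd_rfl) _
  · rintro ⟨c, hc⟩
    refine ⟨(c : ZMod n), ?_⟩
    have := ZMod.natCast_rightInverse (n := n) x
    rw [← this, hc]
    push_cast
    ring

lemma span_ne_bot_top {n d : ℕ} [NeZero n] (hd : d ∣ n) (h2 : 2 ≤ d) (hdn : d < n) :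
    Ideal.span {(d : ZMod n)} ≠ ⊥ ∧ Ideal.span {(d : ZMod n)} ≠ ⊤ := by
  constructor
  · intro h
    rw [Ideal.span_singleton_eq_bot, ZMod.natCast_eq_zero_iff] at h
    exact absurd (Nat.le_of_dvd (by omega) h) (by omega)
  · intro h
    rw [Ideal.span_singleton_eq_top, ZMod.isUnit_iff_coprime] at h
    have : Nat.gcd d n = d := Nat.gcd_eq_left hd
    rw [Nat.Coprime] at h
    omega

lemma dvd_of_span_le {n d e : ℕ} [NeZero n] (hd : d ∣ n) (he : e < n)
    (h : Ideal.span {(e : ZMod n)} ≤ Ideal.span {(d : ZMod n)}) : d ∣ e := by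
  rw [Ideal.span_singleton_le_span_singleton] at h
  have := (dvd_val_iff hd _).mp h
  rwa [ZMod.val_natCast, Nat.mod_eq_of_lt he] at this

lemma span_second {n m pr : ℕ} [NeZero n] (hn : n = m * pr) (hpr : pr.Prime)
    (hm : 0 < m) : IsSecondIdeal (Ideal.span {(m : ZMod n)}) := by
  have hpr2 := hpr.two_le
  have hmn : m < n := by nlinarith
  constructor
  · intro h
    rw [Ideal.span_singleton_eq_bot, ZMod.natCast_eq_zero_iff] at h
    exact absurd (Nat.le_of_dvd hm h) (by omega)
  · intro r
    have hsp : r • Ideal.span {(m : ZMod n)} = Ideal.span {r * (m : ZMod n)} := by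
      have h0 := Submodule.smul_span (α := ZMod n) (R := ZMod n) (M := ZMod n) r {(m : ZMod n)}
      rwa [Set.smul_set_singleton, smul_eq_mul] at h0
    rw [hsp]
    by_cases h : pr ∣ r.val
    · left
      have : r * (m : ZMod n) = 0 := by
        have hx := ZMod.natCast_rightInverse (n := n) r
        rw [← hx, ← Nat.cast_mul, ZMod.natCast_eq_zero_iff]
        obtain ⟨c, hc⟩ := h
        exact ⟨c, by rw [hc, hn]; ring⟩
      rw [this, Ideal.span_singleton_eq_bot.mpr rfl]
    · right
      haveI : NeZero pr := ⟨hpr.pos.ne'⟩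
      apply le_antisymm
      · exact Ideal.span_singleton_le_span_singleton.mpr ⟨r, by ring⟩
      · rw [Ideal.span_singleton_le_span_singleton]
        have hcop : Nat.Coprime r.val pr := (hpr.coprime_iff_not_dvd.mpr h).symm
        set u := ((r.val : ZMod pr)⁻¹).val with hu
        have h1 : ((r.val * u : ℕ) : ZMod pr) = ((1 : ℕ) : ZMod pr) := by
          push_cast
          rw [hu, ZMod.natCast_rightInverse]
          exact ZMod.coe_mul_inv_eq_one r.val hcop
        have h2 : r.val * u ≡ 1 [MOD pr] := (ZMod.natCast_eq_natCast_iff _ _ _).mp h1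
        have h3 : r.val * u * m ≡ 1 * m [MOD pr * m] := h2.mul_right' m
        have hn' : pr * m = n := by rw [hn]; ring
        have h4 : ((r.val * u * m : ℕ) : ZMod n) = ((1 * m : ℕ) : ZMod n) := by
          rw [ZMod.natCast_eq_natCast_iff]
          exact hn' ▸ h3
        refine ⟨(u : ZMod n), ?_⟩
        have hx := ZMod.natCast_rightInverse (n := n) r
        rw [← hx]
        push_cast at h4
        rw [one_mul] at h4
        exact h4.symm.trans (by ring)

/-- If `n = p₁p₂⋯p_k` with `k ≥ 3` and the `pᵢ` pairwise distinct
primes, then the ideals `⟨p₁⋯p_{k-1}⟩`, `⟨p₁⋯p_{k-2}⟩` and `⟨p_{k-1}⟩` of `ℤ_n` are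
three pairwise adjacent vertices of `SII (ℤ_n)`; in particular `SII (ℤ_n)` contains
a cycle of length 3. -/
theorem stmt0 (k : ℕ) (hk : 3 ≤ k) (p : Fin k → ℕ) (hp : ∀ i, (p i).Prime)
    (hinj : Function.Injective p) (n : ℕ) (hn : n = ∏ i, p i)
    (I J K : Ideal (ZMod n))
    (hI : I = Ideal.span {((∏ i ∈ Finset.univ.filter fun i : Fin k => (i : ℕ) < k - 1, p i : ℕ) : ZMod n)})
    (hJ : J = Ideal.span {((∏ i ∈ Finset.univ.filter fun i : Fin k => (i : ℕ) < k - 2, p i : ℕ) : ZMod n)})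
    (hK : K = Ideal.span {((p ⟨k - 2, by omega⟩ : ℕ) : ZMod n)}) :
    ∃ (hvI : I ≠ ⊥ ∧ I ≠ ⊤) (hvJ : J ≠ ⊥ ∧ J ≠ ⊤) (hvK : K ≠ ⊥ ∧ K ≠ ⊤),
      (SII (ZMod n)).Adj ⟨I, hvI⟩ ⟨J, hvJ⟩ ∧
      (SII (ZMod n)).Adj ⟨J, hvJ⟩ ⟨K, hvK⟩ ∧
      (SII (ZMod n)).Adj ⟨K, hvK⟩ ⟨I, hvI⟩ := by
  set m1 : ℕ := ∏ i ∈ Finset.univ.filter fun i : Fin k => (i : ℕ) < k - 1, p i with hm1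
  set m2 : ℕ := ∏ i ∈ Finset.univ.filter fun i : Fin k => (i : ℕ) < k - 2, p i with hm2
  set q : ℕ := p ⟨k - 2, by omega⟩ with hqdef
  set pr : ℕ := p ⟨k - 1, by omega⟩ with hprdef
  have hq : q.Prime := hp _
  have hpr : pr.Prime := hp _
  -- n = m1 * pr
  have hsplit1 : n = m1 * pr := by
    rw [hn, ← Finset.prod_filter_mul_prod_filter_not Finset.univ
      (fun i : Fin k => (i : ℕ) < k - 1) p, hm1]
    congr 1
    have : Finset.univ.filter (fun i : Fin k => ¬ ((i : ℕ) < k - 1)) = {⟨k - 1, by omega⟩} := by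
      ext i
      simp only [Finset.mem_filter, Finset.mem_univ, true_and, Finset.mem_singleton, Fin.ext_iff]
      have := i.isLt
      omega
    rw [this, Finset.prod_singleton]
  -- m1 = m2 * q
  have hsplit2 : m1 = m2 * q := by
    rw [hm1, ← Finset.prod_filter_mul_prod_filter_not
      (Finset.univ.filter fun i : Fin k => (i : ℕ) < k - 1)
      (fun i : Fin k => (i : ℕ) < k - 2) p, hm2]
    have e1 : (Finset.univ.filter fun i : Fin k => (i : ℕ) < k - 1).filter
        (fun i : Fin k => (i : ℕ) < k - 2) =
        Finset.univ.filter (fun i : Fin k => (i : ℕ) < k - 2) := by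
      ext i
      simp only [Finset.mem_filter, Finset.mem_univ, true_and]
      omega
    have e2 : (Finset.univ.filter fun i : Fin k => (i : ℕ) < k - 1).filter
        (fun i : Fin k => ¬ ((i : ℕ) < k - 2)) = {(⟨k - 2, by omega⟩ : Fin k)} := by
      ext i
      simp only [Finset.mem_filter, Finset.mem_univ, true_and, Finset.mem_singleton, Fin.ext_iff]
      have := i.isLt
      omega
    rw [e1, e2, Finset.prod_singleton]
  have hm2two : 2 ≤ m2 := by
    have h0 : (⟨0, by omega⟩ : Fin k) ∈ Finset.univ.filter
        (fun i : Fin k => (i : ℕ) < k - 2) := by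
      simp only [Finset.mem_filter, Finset.mem_univ, true_and]
      omega
    calc 2 ≤ p ⟨0, by omega⟩ := (hp _).two_le
    _ ≤ m2 := Finset.single_le_prod' (fun i _ => (hp i).one_le) h0
  have hq2 := hq.two_le
  have hpr2 := hpr.two_le
  have hm1two : 2 ≤ m1 := by nlinarith
  have hnpos : 0 < n := by nlinarith
  haveI : NeZero n := ⟨hnpos.ne'⟩
  have hm1n : m1 < n := by nlinarith
  have hm2n : m2 < n := by nlinarith
  have hqn : q < n := by nlinarith
  have hm1dvd : m1 ∣ n := ⟨pr, hsplit1⟩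
  have hm2dvd : m2 ∣ n := ⟨q * pr, by rw [hsplit1, hsplit2]; ring⟩
  have hqdvd : q ∣ n := ⟨m2 * pr, by rw [hsplit1, hsplit2]; ring⟩
  -- q does not divide m2
  have hqm2 : ¬ q ∣ m2 := by
    intro h
    rw [hm2] at h
    obtain ⟨i, hi, hdvd⟩ := (hq.prime.dvd_finset_prod_iff p).mp h
    simp only [Finset.mem_filter, Finset.mem_univ, true_and] at hi
    have : q = p i := ((Nat.prime_dvd_prime_iff_eq hq (hp i)).mp hdvd)
    have := hinj this
    rw [← this] at hi
    simp at hi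
  have hcop : Nat.Coprime q m2 := (hq.coprime_iff_not_dvd.mpr hqm2)
  have hvI : I ≠ ⊥ ∧ I ≠ ⊤ := hI ▸ span_ne_bot_top hm1dvd hm1two hm1n
  have hvJ : J ≠ ⊥ ∧ J ≠ ⊤ := hJ ▸ span_ne_bot_top hm2dvd hm2two hm2n
  have hvK : K ≠ ⊥ ∧ K ≠ ⊤ := hK ▸ span_ne_bot_top hqdvd hq2 hqn
  -- inclusions
  have hIJ : I ≤ J := by
    rw [hI, hJ]
    exact Ideal.span_singleton_le_span_singleton.mpr
      (by exact_mod_cast Nat.cast_dvd_cast (α := ZMod n) ⟨q, hsplit2⟩)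
  have hIK : I ≤ K := by
    rw [hI, hK]
    exact Ideal.span_singleton_le_span_singleton.mpr
      (Nat.cast_dvd_cast ⟨m2, by rw [hsplit2]; ring⟩)
  -- second ideal
  have hsecond : IsSecondIdeal I := hI ▸ span_second hsplit1 hpr (by omega)
  -- intersections
  have hinfIJ : I ⊓ J = I := inf_eq_left.mpr hIJ
  have hinfKI : K ⊓ I = I := inf_eq_right.mpr hIK
  have hinfJK : J ⊓ K = I := by
    apply le_antisymm
    · intro x hx
      rw [Submodule.mem_inf, hJ, hK, Ideal.mem_span_singleton, Ideal.mem_span_singleton] at hx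
      obtain ⟨h1, h2⟩ := hx
      have d1 : m2 ∣ x.val := (dvd_val_iff hm2dvd x).mp h1
      have d2 : q ∣ x.val := (dvd_val_iff hqdvd x).mp h2
      have : m1 ∣ x.val := hsplit2 ▸ Nat.Coprime.mul_dvd_of_dvd_of_dvd hcop.symm d1 d2
      rw [hI, Ideal.mem_span_singleton]
      exact (dvd_val_iff hm1dvd x).mpr this
    · exact le_inf hIJ hIK
  -- distinctness
  have hIneJ : I ≠ J := by
    intro h
    have : m1 ∣ m2 := dvd_of_span_le hm1dvd hm2n
      (by rw [← hJ, ← hI]; exact le_of_eq h.symm)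
    have := Nat.le_of_dvd (by omega) this
    nlinarith
  have hJneK : J ≠ K := by
    intro h
    have hd : m2 ∣ q := dvd_of_span_le hm2dvd hqn
      (by rw [← hK, ← hJ]; exact le_of_eq h.symm)
    have h1 : m2 ∣ Nat.gcd q m2 := Nat.dvd_gcd hd dvd_rfl
    rw [hcop] at h1
    have := Nat.le_of_dvd one_pos h1
    omega
  have hKneI : K ≠ I := by
    intro h
    have : m1 ∣ q := dvd_of_span_le hm1dvd hqn
      (by rw [← hK, ← hI]; exact le_of_eq h)
    have := Nat.le_of_dvd (by omega) this
    nlinarith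
  refine ⟨hvI, hvJ, hvK, ?_, ?_, ?_⟩
  · exact ⟨by simp only [ne_eq, Subtype.mk.injEq]; exact hIneJ,
      by show IsSecondIdeal (I ⊓ J); rw [hinfIJ]; exact hsecond⟩
  · exact ⟨by simp only [ne_eq, Subtype.mk.injEq]; exact hJneK,
      by show IsSecondIdeal (J ⊓ K); rw [hinfJK]; exact hsecond⟩
  · exact ⟨by simp only [ne_eq, Subtype.mk.injEq]; exact hKneI,
      by show IsSecondIdeal (K ⊓ I); rw [hinfKI]; exact hsecond⟩
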